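/- Let q ≥ 1 be an integer, ε > 0, R > 0, m > 0, and let C : ℝ^d × ℝ^d → ℝ be of class C^q. Set C_∞(R) := max over 0 ≤ k ≤ q of sup_{(x,y) ∈ B_R × B_R} ‖D^k C(x,y)‖_op. For f, g ∈ C^q_m(B_R, ℝ), define Γ(x,y) := exp((f(x) + g(y) − C(x,y))/ε). Then for every 1 ≤ k ≤ q: sup_{(x,y) ∈ B_R × B_R} ‖D^k Γ(x,y)‖_op ≤ exp((2m + C_∞(R))/ε) · ∑_{ω ∈ Ω(k)} ε^{−|ω|} (2m + C_∞(R))^{|ω|}. -/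

import Mathlib

open MeasureTheory
open scoped ENNReal

noncomputable section

/-- `ℝ^d` with the Euclidean norm. -/
abbrev Euc (d : ℕ) := EuclideanSpace ℝ (Fin d)

/-- The class `C^r_m(A, F)` of `r`-times continuously differentiable functions whose
Fréchet derivatives up to order `r` are bounded by `m` in operator norm on `A`. -/
def smoothClass {E F : Type*} [NormedAddCommGroup E] [NormedSpace ℝ E]
    [NormedAddCommGroup F] [NormedSpace ℝ F] (r : ℕ) (A : Set E) (m : ℝ) :
    Set (E → F) :=
  {f | ContDiff ℝ (r : ℕ∞) f ∧ ∀ k ≤ r, ∀ x ∈ A, ‖iteratedFDeriv ℝ k f x‖ ≤ m}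


open Set Function

lemma max'_congr {α : Type*} [LinearOrder α] {s t : Finset α} (h : s = t)
    (hs : s.Nonempty) (ht : t.Nonempty) : s.max' hs = t.max' ht := by subst h; rfl

namespace OrderedFinpartition

variable {n : ℕ} (c : OrderedFinpartition n)

/-- The part of index `i`, as a `Finset`. -/
def partFinset (i : Fin c.length) : Finset (Fin n) :=
  Finset.image (c.emb i) Finset.univ

lemma coe_partFinset (i : Fin c.length) :
    (c.partFinset i : Set (Fin n)) = Set.range (c.emb i) := by
  simp [partFinset]

lemma partFinset_nonempty (i : Fin c.length) : (c.partFinset i).Nonempty :=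
  ⟨c.emb i ⟨0, c.partSize_pos i⟩, Finset.mem_image_of_mem _ (Finset.mem_univ _)⟩

lemma card_partFinset (i : Fin c.length) : (c.partFinset i).card = c.partSize i := by
  rw [partFinset, Finset.card_image_of_injective _ (c.emb_strictMono i).injective,
    Finset.card_univ, Fintype.card_fin]

lemma partFinset_injective : Function.Injective c.partFinset := by
  intro i j h
  by_contra hij
  have hd := c.disjoint (Set.mem_univ i) (Set.mem_univ j) hij
  obtain ⟨a, ha⟩ := c.partFinset_nonempty i
  have h1 : (a : Fin n) ∈ Set.range (c.emb i) := by
    rw [← c.coe_partFinset]; exact_mod_cast ha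
  have h2 : (a : Fin n) ∈ Set.range (c.emb j) := by
    rw [← c.coe_partFinset, ← h]; exact_mod_cast ha
  exact Set.disjoint_left.1 hd h1 h2

lemma max'_partFinset (i : Fin c.length) :
    (c.partFinset i).max' (c.partFinset_nonempty i) =
      c.emb i ⟨c.partSize i - 1, Nat.sub_one_lt_of_lt (c.partSize_pos i)⟩ := by
  apply le_antisymm
  · apply Finset.max'_le
    intro b hb
    obtain ⟨a, -, rfl⟩ := Finset.mem_image.1 hb
    refine (c.emb_strictMono i).monotone ?_
    rw [Fin.le_def]
    have := a.2
    dsimp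
    omega
  · exact Finset.le_max' _ _ (Finset.mem_image_of_mem _ (Finset.mem_univ _))

/-- The `Finpartition` of `Finset.univ : Finset (Fin n)` associated to an ordered
finpartition. -/
def toFinpartition : Finpartition (Finset.univ : Finset (Fin n)) where
  parts := Finset.image c.partFinset Finset.univ
  supIndep := by
    rw [Finset.supIndep_iff_pairwiseDisjoint]
    intro s hs t ht hst
    obtain ⟨i, -, rfl⟩ := Finset.mem_image.1 hs
    obtain ⟨j, -, rfl⟩ := Finset.mem_image.1 ht
    have hij : i ≠ j := fun h => hst (by rw [h])
    have hd := c.disjoint (Set.mem_univ i) (Set.mem_univ j) hij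
    simp only [Function.onFun, id_eq]
    rw [Finset.disjoint_left]
    intro a hai haj
    have h1 : (a : Fin n) ∈ Set.range (c.emb i) := by
      rw [← c.coe_partFinset]; exact_mod_cast hai
    have h2 : (a : Fin n) ∈ Set.range (c.emb j) := by
      rw [← c.coe_partFinset]; exact_mod_cast haj
    exact Set.disjoint_left.1 hd h1 h2
  sup_parts := by
    ext a
    simp only [Finset.mem_sup, Finset.mem_univ, iff_true]
    obtain ⟨m, r, hr⟩ := c.cover a
    exact ⟨c.partFinset m, Finset.mem_image_of_mem _ (Finset.mem_univ _),
      by rw [partFinset]; exact hr ▸ Finset.mem_image_of_mem _ (Finset.mem_univ _)⟩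
  bot_notMem := by
    simp only [Finset.bot_eq_empty, Finset.mem_image, Finset.mem_univ, true_and]
    rintro ⟨i, hi⟩
    exact absurd (hi ▸ c.partFinset_nonempty i) (by simp)

lemma card_parts_toFinpartition : c.toFinpartition.parts.card = c.length := by
  rw [toFinpartition, Finset.card_image_of_injective _ c.partFinset_injective,
    Finset.card_univ, Fintype.card_fin]

lemma toFinpartition_injective :
    Function.Injective (toFinpartition : OrderedFinpartition n → _) := by
  intro c c' h
  have hparts : Finset.image c.partFinset Finset.univ
      = Finset.image c'.partFinset Finset.univ := congrArg Finpartition.parts h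
  have hlen : c.length = c'.length := by
    rw [← c.card_parts_toFinpartition, ← c'.card_parts_toFinpartition]
    exact congrArg Finset.card (congrArg Finpartition.parts h)
  obtain ⟨l, ps, pos, emb, mono, pmono, disj, cov⟩ := c
  obtain ⟨l', ps', pos', emb', mono', pmono', disj', cov'⟩ := c'
  dsimp at hlen
  subst hlen
  set c : OrderedFinpartition n := ⟨l, ps, pos, emb, mono, pmono, disj, cov⟩
  set c' : OrderedFinpartition n := ⟨l, ps', pos', emb', mono', pmono', disj', cov'⟩
  have hex : ∀ i : Fin l, ∃ j : Fin l, c'.partFinset j = c.partFinset i := by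
    intro i
    have : c.partFinset i ∈ Finset.image c'.partFinset Finset.univ := by
      rw [← hparts]; exact Finset.mem_image_of_mem _ (Finset.mem_univ _)
    simpa using this
  choose σ hσ using hex
  have hmaxc : ∀ i j : Fin l, c'.partFinset j = c.partFinset i →
      c'.emb j ⟨c'.partSize j - 1, Nat.sub_one_lt_of_lt (c'.partSize_pos j)⟩
        = c.emb i ⟨c.partSize i - 1, Nat.sub_one_lt_of_lt (c.partSize_pos i)⟩ := by
    intro i j hji
    rw [← c'.max'_partFinset, ← c.max'_partFinset]
    exact max'_congr hji _ _
  have hσmono : StrictMono σ := by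
    intro i j hij
    have h1 : c.emb i ⟨c.partSize i - 1, Nat.sub_one_lt_of_lt (c.partSize_pos i)⟩
        < c.emb j ⟨c.partSize j - 1, Nat.sub_one_lt_of_lt (c.partSize_pos j)⟩ :=
      c.parts_strictMono hij
    rw [← hmaxc i (σ i) (hσ i), ← hmaxc j (σ j) (hσ j)] at h1
    exact (c'.parts_strictMono.lt_iff_lt).1 h1
  haveI : WellFoundedLT (Fin l) := inferInstance
  have hσid : σ = id := (StrictMono.range_inj hσmono strictMono_id).1
    (by rw [Set.range_id]
        exact ((Finite.injective_iff_surjective).1 hσmono.injective).range_eq)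
  rw [hσid] at hσ
  simp only [id_eq] at hσ
  have hps : ps = ps' := by
    funext i
    have h1 := c.card_partFinset i
    have h2 := c'.card_partFinset i
    rw [hσ i] at h2
    exact h1.symm.trans h2
  subst hps
  have hemb : emb = emb' := by
    funext i
    haveI : WellFoundedLT (Fin (ps i)) := inferInstance
    refine (StrictMono.range_inj (mono i) (mono' i)).1 ?_
    have h1 := congrArg (fun s : Finset (Fin n) => (s : Set (Fin n))) (hσ i)
    rw [c.coe_partFinset, c'.coe_partFinset] at h1
    exact h1.symm
  subst hemb
  rfl

end OrderedFinpartition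
section Counting

lemma sum_pow_length_le {k : ℕ} {A : ℝ} (hA : 0 ≤ A) :
    ∑ c : OrderedFinpartition k, A ^ c.length ≤
      ∑ ω : Finpartition (Finset.univ : Finset (Fin k)), A ^ ω.parts.card := by
  classical
  calc ∑ c : OrderedFinpartition k, A ^ c.length
      = ∑ c : OrderedFinpartition k, A ^ c.toFinpartition.parts.card := by
        refine Finset.sum_congr rfl fun c _ => ?_
        rw [c.card_parts_toFinpartition]
    _ = ∑ ω ∈ Finset.image OrderedFinpartition.toFinpartition Finset.univ,
          A ^ ω.parts.card := by
        rw [Finset.sum_image (fun a _ b _ h => OrderedFinpartition.toFinpartition_injective h)]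
    _ ≤ ∑ ω : Finpartition (Finset.univ : Finset (Fin k)), A ^ ω.parts.card :=
        Finset.sum_le_sum_of_subset_of_nonneg (Finset.subset_univ _)
          (fun _ _ _ => pow_nonneg hA _)

end Counting

section NormComp

variable {𝕜 : Type*} [NontriviallyNormedField 𝕜]
  {E : Type*} [NormedAddCommGroup E] [NormedSpace 𝕜 E]
  {F : Type*} [NormedAddCommGroup F] [NormedSpace 𝕜 F]
  {G : Type*} [NormedAddCommGroup G] [NormedSpace 𝕜 G]

lemma norm_compAlongOrderedFinpartition_le {n : ℕ} (c : OrderedFinpartition n)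
    (h : ContinuousMultilinearMap 𝕜 (fun _ : Fin c.length => F) G)
    (p : ∀ i : Fin c.length, ContinuousMultilinearMap 𝕜 (fun _ : Fin (c.partSize i) => E) F) :
    ‖c.compAlongOrderedFinpartition h p‖ ≤ ‖h‖ * ∏ i, ‖p i‖ := by
  apply ContinuousMultilinearMap.opNorm_le_bound (by positivity) (fun v => ?_)
  simp only [OrderedFinpartition.compAlongOrderFinpartition_apply]
  apply (h.le_opNorm _).trans
  rw [mul_assoc, ← c.prod_sigma_eq_prod, ← Finset.prod_mul_distrib]
  gcongr with m _
  exact (p m).le_opNorm _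

end NormComp
set_option maxHeartbeats 1000000 in
theorem gamma_iteratedFDeriv_bound
    {d : ℕ} (q : ℕ) (hq : 1 ≤ q) (ε R m : ℝ) (hε : 0 < ε) (hR : 0 < R) (hm : 0 < m)
    (C : Euc d × Euc d → ℝ) (hC : ContDiff ℝ (q : ℕ∞) C)
    (Cinf : ℝ)
    (hCinf : Cinf = ⨆ k : Fin (q + 1),
      ⨆ z ∈ (Metric.closedBall (0 : Euc d) R) ×ˢ (Metric.closedBall (0 : Euc d) R),
        ‖iteratedFDeriv ℝ (k : ℕ) C z‖)
    (f g : Euc d → ℝ)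
    (hf : f ∈ smoothClass q (Metric.closedBall (0 : Euc d) R) m)
    (hg : g ∈ smoothClass q (Metric.closedBall (0 : Euc d) R) m) :
    ∀ k : ℕ, 1 ≤ k → k ≤ q →
      ∀ x ∈ Metric.closedBall (0 : Euc d) R, ∀ y ∈ Metric.closedBall (0 : Euc d) R,
        ‖iteratedFDeriv ℝ k
            (fun z : Euc d × Euc d => Real.exp ((f z.1 + g z.2 - C z) / ε)) (x, y)‖ ≤
          Real.exp ((2 * m + Cinf) / ε) *
            ∑ ω : Finpartition (Finset.univ : Finset (Fin k)),
              ε⁻¹ ^ ω.parts.card * (2 * m + Cinf) ^ ω.parts.card := by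
  classical
  intro k hk1 hkq x hx y hy
  set K : Set (Euc d × Euc d) :=
    (Metric.closedBall (0 : Euc d) R) ×ˢ (Metric.closedBall (0 : Euc d) R) with hKdef
  have hzK : ((x, y) : Euc d × Euc d) ∈ K := Set.mk_mem_prod hx hy
  have h0K : ((0, 0) : Euc d × Euc d) ∈ K :=
    Set.mk_mem_prod (Metric.mem_closedBall_self hR.le) (Metric.mem_closedBall_self hR.le)
  have hKc : IsCompact K :=
    (isCompact_closedBall _ _).prod (isCompact_closedBall _ _)
  -- uniform bound on derivatives of `C` on `K`
  obtain ⟨B, hB⟩ : ∃ B : ℝ, ∀ j : Fin (q + 1), ∀ z ∈ K,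
      ‖iteratedFDeriv ℝ (j : ℕ) C z‖ ≤ B := by
    have h1 : ∀ j : Fin (q + 1), ∃ Bj : ℝ, ∀ z ∈ K,
        ‖iteratedFDeriv ℝ (j : ℕ) C z‖ ≤ Bj := by
      intro j
      have hcont : Continuous fun z => ‖iteratedFDeriv ℝ (j : ℕ) C z‖ :=
        (hC.continuous_iteratedFDeriv (by exact_mod_cast Nat.lt_succ_iff.mp j.2)).norm
      obtain ⟨z0, -, hz0⟩ := hKc.exists_isMaxOn ⟨_, h0K⟩ hcont.continuousOn
      exact ⟨_, fun z hz => hz0 hz⟩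
    choose Bf hBf using h1
    obtain ⟨B, hB⟩ := Finite.exists_le Bf
    exact ⟨B, fun j z hz => (hBf j z hz).trans (hB j)⟩
  have hCle : ∀ j : ℕ, j ≤ q → ∀ z ∈ K, ‖iteratedFDeriv ℝ j C z‖ ≤ Cinf := by
    intro j hj z hz
    have hzle : ‖iteratedFDeriv ℝ j C z‖ ≤ ⨆ w ∈ K, ‖iteratedFDeriv ℝ j C w‖ := by
      have hbdd : BddAbove (Set.range fun w => ⨆ _ : w ∈ K, ‖iteratedFDeriv ℝ j C w‖) := by
        refine ⟨max B 0, ?_⟩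
        rintro - ⟨w, rfl⟩
        exact Real.iSup_le (fun hw => le_max_of_le_left (hB ⟨j, by omega⟩ w hw))
          (le_max_right _ _)
      have h2 : (⨆ _ : z ∈ K, ‖iteratedFDeriv ℝ j C z‖) = ‖iteratedFDeriv ℝ j C z‖ :=
        ciSup_pos hz
      rw [← h2]
      exact le_ciSup hbdd z
    refine hzle.trans ?_
    rw [hCinf]
    exact le_ciSup (f := fun i : Fin (q + 1) => ⨆ w ∈ K, ‖iteratedFDeriv ℝ (i : ℕ) C w‖)
      (Set.Finite.bddAbove (Set.finite_range _)) ⟨j, by omega⟩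
  have hCinf0 : 0 ≤ Cinf := le_trans (norm_nonneg _) (hCle 0 (by omega) _ h0K)
  -- the function F and its derivative bounds
  set F : Euc d × Euc d → ℝ := fun z => f z.1 + g z.2 - C z with hFdef
  have hf1 : ContDiff ℝ (q : ℕ∞) (fun z : Euc d × Euc d => f z.1) := hf.1.comp contDiff_fst
  have hg1 : ContDiff ℝ (q : ℕ∞) (fun z : Euc d × Euc d => g z.2) := hg.1.comp contDiff_snd
  have hFc : ContDiff ℝ (q : ℕ∞) F := (hf1.add hg1).sub hC
  have hfd : ∀ j : ℕ, j ≤ q → ∀ z ∈ K,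
      ‖iteratedFDeriv ℝ j (fun w : Euc d × Euc d => f w.1) z‖ ≤ m := by
    intro j hj z hz
    have hcomp := (ContinuousLinearMap.fst ℝ (Euc d) (Euc d)).iteratedFDeriv_comp_right
      hf.1 z (by exact_mod_cast hj)
    have heq : (fun w : Euc d × Euc d => f w.1)
        = f ∘ (ContinuousLinearMap.fst ℝ (Euc d) (Euc d)) := rfl
    rw [heq, hcomp]
    refine (ContinuousMultilinearMap.norm_compContinuousLinearMap_le _ _).trans ?_
    have h1 : ‖iteratedFDeriv ℝ j f ((ContinuousLinearMap.fst ℝ (Euc d) (Euc d)) z)‖ ≤ m :=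
      hf.2 j hj z.1 hz.1
    have h2 : ∏ _i : Fin j, ‖ContinuousLinearMap.fst ℝ (Euc d) (Euc d)‖ ≤ 1 :=
      Finset.prod_le_one (fun _ _ => norm_nonneg _) (fun _ _ => ContinuousLinearMap.norm_fst_le _ _ _)
    calc ‖iteratedFDeriv ℝ j f ((ContinuousLinearMap.fst ℝ (Euc d) (Euc d)) z)‖
          * ∏ _i : Fin j, ‖ContinuousLinearMap.fst ℝ (Euc d) (Euc d)‖
        ≤ m * 1 := mul_le_mul h1 h2 (Finset.prod_nonneg fun _ _ => norm_nonneg _) hm.le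
      _ = m := mul_one m
  have hgd : ∀ j : ℕ, j ≤ q → ∀ z ∈ K,
      ‖iteratedFDeriv ℝ j (fun w : Euc d × Euc d => g w.2) z‖ ≤ m := by
    intro j hj z hz
    have hcomp := (ContinuousLinearMap.snd ℝ (Euc d) (Euc d)).iteratedFDeriv_comp_right
      hg.1 z (by exact_mod_cast hj)
    have heq : (fun w : Euc d × Euc d => g w.2)
        = g ∘ (ContinuousLinearMap.snd ℝ (Euc d) (Euc d)) := rfl
    rw [heq, hcomp]
    refine (ContinuousMultilinearMap.norm_compContinuousLinearMap_le _ _).trans ?_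
    have h1 : ‖iteratedFDeriv ℝ j g ((ContinuousLinearMap.snd ℝ (Euc d) (Euc d)) z)‖ ≤ m :=
      hg.2 j hj z.2 hz.2
    have h2 : ∏ _i : Fin j, ‖ContinuousLinearMap.snd ℝ (Euc d) (Euc d)‖ ≤ 1 :=
      Finset.prod_le_one (fun _ _ => norm_nonneg _) (fun _ _ => ContinuousLinearMap.norm_snd_le _ _ _)
    calc ‖iteratedFDeriv ℝ j g ((ContinuousLinearMap.snd ℝ (Euc d) (Euc d)) z)‖
          * ∏ _i : Fin j, ‖ContinuousLinearMap.snd ℝ (Euc d) (Euc d)‖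
        ≤ m * 1 := mul_le_mul h1 h2 (Finset.prod_nonneg fun _ _ => norm_nonneg _) hm.le
      _ = m := mul_one m
  have hFd : ∀ j : ℕ, j ≤ q → ∀ z ∈ K,
      ‖iteratedFDeriv ℝ j F z‖ ≤ 2 * m + Cinf := by
    intro j hj z hz
    have hf1j : ContDiff ℝ (j : ℕ∞) (fun z : Euc d × Euc d => f z.1) :=
      hf1.of_le (by exact_mod_cast hj)
    have hg1j : ContDiff ℝ (j : ℕ∞) (fun z : Euc d × Euc d => g z.2) :=
      hg1.of_le (by exact_mod_cast hj)
    have hCj : ContDiff ℝ (j : ℕ∞) C := hC.of_le (by exact_mod_cast hj)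
    have e1 : F = (((fun w : Euc d × Euc d => f w.1) + fun w => g w.2) + (-C)) := by
      funext w
      simp [hFdef, sub_eq_add_neg]
    have h12 : ContDiff ℝ (j : ℕ∞) ((fun w : Euc d × Euc d => f w.1) + fun w => g w.2) :=
      hf1j.add hg1j
    have hnC : ContDiff ℝ (j : ℕ∞) (-C) := hCj.neg
    rw [e1, iteratedFDeriv_add_apply h12.contDiffAt hnC.contDiffAt,
      iteratedFDeriv_add_apply hf1j.contDiffAt hg1j.contDiffAt, iteratedFDeriv_neg_apply]
    have := hfd j hj z hz
    have := hgd j hj z hz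
    have := hCle j hj z hz
    calc ‖iteratedFDeriv ℝ j (fun w : Euc d × Euc d => f w.1) z
          + iteratedFDeriv ℝ j (fun w : Euc d × Euc d => g w.2) z
          + -iteratedFDeriv ℝ j C z‖
        ≤ ‖iteratedFDeriv ℝ j (fun w : Euc d × Euc d => f w.1) z
          + iteratedFDeriv ℝ j (fun w : Euc d × Euc d => g w.2) z‖
          + ‖-iteratedFDeriv ℝ j C z‖ := norm_add_le _ _
      _ ≤ (‖iteratedFDeriv ℝ j (fun w : Euc d × Euc d => f w.1) z‖
          + ‖iteratedFDeriv ℝ j (fun w : Euc d × Euc d => g w.2) z‖)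
          + ‖iteratedFDeriv ℝ j C z‖ := by
          rw [norm_neg]; exact add_le_add (norm_add_le _ _) le_rfl
      _ ≤ 2 * m + Cinf := by linarith
  -- the function u
  set u : Euc d × Euc d → ℝ := ε⁻¹ • F with hudef
  have hu : ContDiff ℝ (q : ℕ∞) u := hFc.const_smul ε⁻¹
  have hud : ∀ j : ℕ, j ≤ q → ∀ z ∈ K,
      ‖iteratedFDeriv ℝ j u z‖ ≤ ε⁻¹ * (2 * m + Cinf) := by
    intro j hj z hz
    rw [hudef, iteratedFDeriv_const_smul_apply (hFc.of_le (by exact_mod_cast hj)).contDiffAt]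
    calc ‖ε⁻¹ • iteratedFDeriv ℝ j F z‖
        ≤ ‖ε⁻¹‖ * ‖iteratedFDeriv ℝ j F z‖ := ContinuousMultilinearMap.opNorm_smul_le _ _
      _ ≤ ε⁻¹ * (2 * m + Cinf) := by
          rw [Real.norm_eq_abs, abs_of_nonneg (inv_nonneg.2 hε.le)]
          exact mul_le_mul_of_nonneg_left (hFd j hj z hz) (inv_nonneg.2 hε.le)
  have hval : u (x, y) ≤ ε⁻¹ * (2 * m + Cinf) := by
    have h0 := hFd 0 (by omega) _ hzK
    rw [norm_iteratedFDeriv_zero, Real.norm_eq_abs] at h0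
    have h1 : F (x, y) ≤ 2 * m + Cinf := (le_abs_self _).trans h0
    calc u (x, y) = ε⁻¹ * F (x, y) := rfl
      _ ≤ ε⁻¹ * (2 * m + Cinf) := mul_le_mul_of_nonneg_left h1 (inv_nonneg.2 hε.le)
  have hgoal : (fun z : Euc d × Euc d => Real.exp ((f z.1 + g z.2 - C z) / ε))
      = Real.exp ∘ u := by
    funext z
    simp only [Function.comp_apply, hudef, Pi.smul_apply, smul_eq_mul, hFdef]
    rw [div_eq_inv_mul]
  -- Faà di Bruno
  have hexp : HasFTaylorSeriesUpTo (q : ℕ∞) Real.exp (ftaylorSeries ℝ Real.exp) :=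
    contDiff_iff_ftaylorSeries.1 (Real.contDiff_exp.of_le le_top)
  have hus : HasFTaylorSeriesUpTo (q : ℕ∞) u (ftaylorSeries ℝ u) :=
    contDiff_iff_ftaylorSeries.1 hu
  have hcomp : HasFTaylorSeriesUpTo (q : ℕ∞) (Real.exp ∘ u)
      (fun z => (ftaylorSeries ℝ Real.exp (u z)).taylorComp (ftaylorSeries ℝ u z)) := by
    rw [← hasFTaylorSeriesUpToOn_univ_iff] at hexp hus ⊢
    exact hexp.comp hus (Set.mapsTo_univ _ _)
  have heq := (hcomp.eq_iteratedFDeriv (by exact_mod_cast hkq) (x, y)).symm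
  rw [hgoal, heq]
  -- norm estimate
  set A : ℝ := ε⁻¹ * (2 * m + Cinf) with hAdef
  have hA0 : 0 ≤ A := mul_nonneg (inv_nonneg.2 hε.le) (by linarith)
  have hM0 : 0 ≤ 2 * m + Cinf := by linarith
  calc ‖(ftaylorSeries ℝ Real.exp (u (x, y))).taylorComp (ftaylorSeries ℝ u (x, y)) k‖
      ≤ ∑ c : OrderedFinpartition k, Real.exp A * A ^ c.length := by
        refine norm_sum_le_of_le _ fun c _ => ?_
        have hb := norm_compAlongOrderedFinpartition_le c
          (ftaylorSeries ℝ Real.exp (u (x, y)) c.length)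
          (fun i => ftaylorSeries ℝ u (x, y) (c.partSize i))
        refine hb.trans ?_
        have h1 : ‖ftaylorSeries ℝ Real.exp (u (x, y)) c.length‖ ≤ Real.exp A := by
          have h2 : ftaylorSeries ℝ Real.exp (u (x, y)) c.length
              = iteratedFDeriv ℝ c.length Real.exp (u (x, y)) := rfl
          rw [h2, norm_iteratedFDeriv_eq_norm_iteratedDeriv, iteratedDeriv_eq_iterate,
            Real.iter_deriv_exp, Real.norm_eq_abs, abs_of_pos (Real.exp_pos _)]
          exact Real.exp_le_exp.2 hval
        have h2 : ∀ i : Fin c.length, ‖ftaylorSeries ℝ u (x, y) (c.partSize i)‖ ≤ A :=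
          fun i => hud _ ((c.partSize_le i).trans hkq) _ hzK
        calc ‖ftaylorSeries ℝ Real.exp (u (x, y)) c.length‖
              * ∏ i, ‖ftaylorSeries ℝ u (x, y) (c.partSize i)‖
            ≤ Real.exp A * ∏ _i : Fin c.length, A :=
              mul_le_mul h1 (Finset.prod_le_prod (fun _ _ => norm_nonneg _) (fun i _ => h2 i))
                (Finset.prod_nonneg fun _ _ => norm_nonneg _) (Real.exp_pos _).le
          _ = Real.exp A * A ^ c.length := by
              rw [Finset.prod_const, Finset.card_univ, Fintype.card_fin]
    _ = Real.exp A * ∑ c : OrderedFinpartition k, A ^ c.length := by rw [Finset.mul_sum]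
    _ ≤ Real.exp A * ∑ ω : Finpartition (Finset.univ : Finset (Fin k)), A ^ ω.parts.card :=
        mul_le_mul_of_nonneg_left (sum_pow_length_le hA0) (Real.exp_pos _).le
    _ = Real.exp ((2 * m + Cinf) / ε) *
          ∑ ω : Finpartition (Finset.univ : Finset (Fin k)),
            ε⁻¹ ^ ω.parts.card * (2 * m + Cinf) ^ ω.parts.card := by
        rw [div_eq_inv_mul]
        congr 1
        refine Finset.sum_congr rfl fun ω _ => ?_
        rw [hAdef, mul_pow]
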